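/- Every finite nonempty (3,4)-class C ⊆ {0,1}^n satisfies TD_min(C) ≤ 2, and consequently RTD(C) ≤ 2 for every (3,4)-class (note every subclass of a (3,4)-class is a (3,4)-class). -/

import Mathlib

/-!
If some set `A` of at most two coordinates carries four patterns, then two distinct concepts
agreeing on `A`, together with a coordinate where they differ, would give five patterns on three
coordinates; so `A` teaches every concept. Otherwise `C` is a (2,3)-class, and a smallest nonempty
proper halfspace `{c | c i = v}` is a singleton, taught by `{i}`: if it contained two concepts
differing at `j`, some halfspace `{c | c j = w}` would be strictly smaller, or all four patterns
would appear on `{i, j}`. Subclasses of (3,4)-classes are (3,4)-classes, so the bound holds at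
every step of the RTD recursion.
-/

open Finset

def IsTeachingSet {n : ℕ} (C : Finset (Fin n → Bool)) (c : Fin n → Bool)
    (A : Finset (Fin n)) : Prop :=
  ∀ c' ∈ C, c' ≠ c → ∃ i ∈ A, c' i ≠ c i

noncomputable def TD {n : ℕ} (C : Finset (Fin n → Bool)) (c : Fin n → Bool) : ℕ :=
  sInf {k | ∃ A : Finset (Fin n), A.card = k ∧ IsTeachingSet C c A}

noncomputable def TDmin {n : ℕ} (C : Finset (Fin n → Bool)) : ℕ :=
  sInf {k | ∃ c ∈ C, TD C c = k}

noncomputable def patterns {n : ℕ} (C : Finset (Fin n → Bool)) (A : Finset (Fin n)) :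
    Finset (A → Bool) :=
  @Finset.image _ _ (Classical.decEq _) (fun c (i : A) => c i.1) C

def IsXYClass {n : ℕ} (C : Finset (Fin n → Bool)) (a b : ℕ) : Prop :=
  ∀ A : Finset (Fin n), A.card ≤ a → (patterns C A).card ≤ b

def Shatters {n : ℕ} (C : Finset (Fin n → Bool)) (A : Finset (Fin n)) : Prop :=
  ∀ f : A → Bool, ∃ c ∈ C, ∀ i : A, c i.1 = f i

noncomputable def VCD {n : ℕ} (C : Finset (Fin n → Bool)) : ℕ :=
  sSup {k | ∃ A : Finset (Fin n), A.card = k ∧ Shatters C A}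

noncomputable def eraseMin {n : ℕ} (C : Finset (Fin n → Bool)) : Finset (Fin n → Bool) :=
  @Finset.filter _ (fun c => TD C c ≠ TDmin C) (Classical.decPred _) C

noncomputable def RTD {n : ℕ} (C : Finset (Fin n → Bool)) : ℕ :=
  sSup (Set.range fun t => TDmin (eraseMin^[t] C))

noncomputable def fDim (a b : ℕ) : ℕ∞ :=
  sSup {m : ℕ∞ | ∃ (n : ℕ) (C : Finset (Fin n → Bool)),
    C.Nonempty ∧ IsXYClass C a b ∧ (TDmin C : ℕ∞) = m}

noncomputable def consistClass {n : ℕ} (C : Finset (Fin n → Bool)) (Y : Finset (Fin n))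
    (b : Fin n → Bool) : Finset (Fin n → Bool) :=
  @Finset.filter _ (fun c => ∀ i ∈ Y, c i = b i) (Classical.decPred _) C

noncomputable def prodClass {n1 n2 : ℕ} (C1 : Finset (Fin n1 → Bool))
    (C2 : Finset (Fin n2 → Bool)) : Finset (Fin (n1 + n2) → Bool) :=
  @Finset.filter _
    (fun c => (fun i => c (Fin.castAdd n2 i)) ∈ C1 ∧ (fun j => c (Fin.natAdd n1 j)) ∈ C2)
    (Classical.decPred _) Finset.univ

section Patterns

variable {n : ℕ} {C D : Finset (Fin n → Bool)}

theorem mem_patterns {A : Finset (Fin n)} {q : A → Bool} :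
    q ∈ patterns C A ↔ ∃ c ∈ C, (fun i : A => c i.1) = q := by
  unfold patterns
  exact @Finset.mem_image _ _ (Classical.decEq _) _ _ _

theorem restrict_mem_patterns {c : Fin n → Bool} (hc : c ∈ C) (A : Finset (Fin n)) :
    (fun i : A => c i.1) ∈ patterns C A :=
  mem_patterns.2 ⟨c, hc, rfl⟩

theorem patterns_mono (h : D ⊆ C) (A : Finset (Fin n)) : patterns D A ⊆ patterns C A := by
  intro q hq
  obtain ⟨d, hd, rfl⟩ := mem_patterns.1 hq
  exact restrict_mem_patterns (h hd) A

theorem IsXYClass.mono {a b : ℕ} (hC : IsXYClass C a b) (h : D ⊆ C) : IsXYClass D a b :=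
  fun A hA => (card_le_card (patterns_mono h A)).trans (hC A hA)

theorem patterns_eq_image_restrict {A B : Finset (Fin n)} [DecidableEq (A → Bool)]
    (hAB : A ⊆ B) :
    patterns C A = (patterns C B).image fun p (i : A) => p ⟨i.1, hAB i.2⟩ := by
  ext q
  simp only [mem_image, mem_patterns]
  constructor
  · rintro ⟨c, hc, rfl⟩
    exact ⟨_, ⟨c, hc, rfl⟩, rfl⟩
  · rintro ⟨_, ⟨c, hc, rfl⟩, rfl⟩
    exact ⟨c, hc, rfl⟩

/-- Restricting from `insert k A` to `A` identifies the distinct patterns of `c` and `c'`. -/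
theorem card_patterns_lt_card_patterns_insert {A : Finset (Fin n)} {k : Fin n}
    {c c' : Fin n → Bool} (hc : c ∈ C) (hc' : c' ∈ C) (hagree : ∀ i ∈ A, c i = c' i)
    (hk : c k ≠ c' k) : (patterns C A).card < (patterns C (insert k A)).card := by
  classical
  rw [patterns_eq_image_restrict (subset_insert k A)]
  refine lt_of_le_of_ne card_image_le fun h => hk ?_
  have hkA : k ∈ insert k A := mem_insert_self k A
  refine congrFun (card_image_iff.1 h (restrict_mem_patterns hc _) (restrict_mem_patterns hc' _)
    (funext fun i => hagree i.1 i.2)) ⟨k, hkA⟩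

theorem four_le_card_patterns_pair {i j : Fin n}
    (h : ∀ a b : Bool, ∃ c ∈ C, c i = a ∧ c j = b) : 4 ≤ (patterns C {i, j}).card := by
  classical
  have hi : i ∈ ({i, j} : Finset (Fin n)) := mem_insert_self i {j}
  have hj : j ∈ ({i, j} : Finset (Fin n)) := mem_insert_of_mem (mem_singleton_self j)
  have hsurj : (univ : Finset (Bool × Bool)) ⊆
      (patterns C {i, j}).image fun p => (p ⟨i, hi⟩, p ⟨j, hj⟩) := by
    rintro ⟨a, b⟩ -
    obtain ⟨c, hc, rfl, rfl⟩ := h a b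
    exact mem_image_of_mem _ (restrict_mem_patterns hc _)
  calc 4 = (univ : Finset (Bool × Bool)).card := rfl
    _ ≤ _ := card_le_card hsurj
    _ ≤ _ := card_image_le

end Patterns

section TeachingSets

variable {n : ℕ} {C : Finset (Fin n → Bool)}

theorem isTeachingSet_of_le_card_patterns {a b : ℕ} (hC : IsXYClass C a b) {A : Finset (Fin n)}
    (hA : A.card < a) (hb : b ≤ (patterns C A).card) {c : Fin n → Bool} (hc : c ∈ C) :
    IsTeachingSet C c A := by
  intro c' hc' hne
  by_contra! hagree
  obtain ⟨k, hk⟩ := Function.ne_iff.1 hne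
  have hlt := card_patterns_lt_card_patterns_insert hc' hc hagree hk
  have hle := hC (insert k A) ((card_insert_le k A).trans hA)
  omega

theorem Bool.eq_or_eq_of_ne {x y : Bool} (h : x ≠ y) (b : Bool) : x = b ∨ y = b := by
  revert x y b; decide

theorem not_forall_exists_of_isXYClass_two_three (hC : IsXYClass C 2 3) (i j : Fin n) :
    ¬∀ a b : Bool, ∃ c ∈ C, c i = a ∧ c j = b := fun h =>
  absurd (hC {i, j} card_le_two) (not_le.2 (four_le_card_patterns_pair h))

/-- The smaller halfspace is `{e | e j = !d j}`; if it left `{e | e i = v}`, all four patterns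
would appear on `{i, j}`. -/
theorem exists_filter_ssubset_filter (hC : IsXYClass C 2 3) {i j : Fin n} {v : Bool}
    {c c' d : Fin n → Bool} (hc : c ∈ C) (hc' : c' ∈ C) (hd : d ∈ C) (hci : c i = v)
    (hc'i : c' i = v) (hdi : d i = !v) (hj : c j ≠ c' j) :
    ∃ w, (∃ e ∈ C, e j = w) ∧ (∃ e ∈ C, e j = !w) ∧
      C.filter (fun e => e j = w) ⊂ C.filter (fun e => e i = v) := by
  have hS : ∀ b, ∃ e ∈ C, e i = v ∧ e j = b := fun b =>
    (Bool.eq_or_eq_of_ne hj b).elim (fun h => ⟨c, hc, hci, h⟩) (fun h => ⟨c', hc', hc'i, h⟩)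
  refine ⟨!d j, ?_, ⟨d, hd, (Bool.not_not _).symm⟩, ?_⟩
  · obtain ⟨e, he, -, hej⟩ := hS (!d j)
    exact ⟨e, he, hej⟩
  refine (ssubset_iff_of_subset fun e he => ?_).2 ?_
  · rw [mem_filter] at he ⊢
    refine ⟨he.1, by_contra fun hei => not_forall_exists_of_isXYClass_two_three hC i j ?_⟩
    intro a b
    by_cases ha : a = v
    · exact ha ▸ hS b
    · have hde : d j ≠ e j := he.2 ▸ Bool.self_ne_not _
      have hda : d i = a := hdi.trans (Bool.eq_not.2 ha).symm
      have hea : e i = a := (Bool.eq_not.2 hei).trans (Bool.eq_not.2 ha).symm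
      exact (Bool.eq_or_eq_of_ne hde b).elim (fun h => ⟨d, hd, hda, h⟩)
        (fun h => ⟨e, he.1, hea, h⟩)
  · obtain ⟨e, he, hei, hej⟩ := hS (d j)
    refine ⟨e, mem_filter.2 ⟨he, hei⟩, fun h => ?_⟩
    exact Bool.not_ne_self _ ((mem_filter.1 h).2.symm.trans hej)

/-- A halfspace `{c | c i = v}` that is nonempty, proper, and of minimal size is a singleton, so
`{i}` teaches its element. -/
theorem exists_isTeachingSet_card_le_one (hC : IsXYClass C 2 3) (hne : C.Nonempty) :
    ∃ c ∈ C, ∃ A : Finset (Fin n), A.card ≤ 1 ∧ IsTeachingSet C c A := by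
  classical
  obtain ⟨c0, hc0⟩ := hne
  by_cases hconst : ∀ c ∈ C, c = c0
  · exact ⟨c0, hc0, ∅, by simp, fun c' hc' hne => absurd (hconst c' hc') hne⟩
  push Not at hconst
  obtain ⟨c1, hc1, hc10⟩ := hconst
  obtain ⟨i0, hi0⟩ := Function.ne_iff.1 hc10
  set P := univ.filter fun p : Fin n × Bool =>
    (∃ e ∈ C, e p.1 = p.2) ∧ ∃ e ∈ C, e p.1 = !p.2
  have hP : (i0, c1 i0) ∈ P :=
    mem_filter.2 ⟨mem_univ _, ⟨c1, hc1, rfl⟩, c0, hc0, Bool.eq_not.2 hi0.symm⟩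
  obtain ⟨⟨i, v⟩, hiv, hmin⟩ :=
    P.exists_min_image (fun p => (C.filter fun e => e p.1 = p.2).card) ⟨_, hP⟩
  obtain ⟨⟨c, hc, hci⟩, d, hd, hdi⟩ := (mem_filter.1 hiv).2
  refine ⟨c, hc, {i}, (card_singleton i).le, fun c' hc' hne =>
    ⟨i, mem_singleton_self i, fun hc'i => ?_⟩⟩
  obtain ⟨j, hj⟩ := Function.ne_iff.1 hne
  obtain ⟨w, hw, hw', hlt⟩ :=
    exists_filter_ssubset_filter hC hc' hc hd (hc'i.trans hci) hci hdi hj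
  exact (card_lt_card hlt).not_ge (hmin (j, w) (mem_filter.2 ⟨mem_univ _, hw, hw'⟩))

theorem exists_isTeachingSet_card_le_two (hC : IsXYClass C 3 4) (hne : C.Nonempty) :
    ∃ c ∈ C, ∃ A : Finset (Fin n), A.card ≤ 2 ∧ IsTeachingSet C c A := by
  by_cases h23 : IsXYClass C 2 3
  · obtain ⟨c, hc, A, hA, hTS⟩ := exists_isTeachingSet_card_le_one h23 hne
    exact ⟨c, hc, A, hA.trans one_le_two, hTS⟩
  · simp only [IsXYClass, not_forall, not_le] at h23
    obtain ⟨A, hA, hpat⟩ := h23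
    obtain ⟨c, hc⟩ := hne
    exact ⟨c, hc, A, hA, isTeachingSet_of_le_card_patterns hC (Nat.lt_succ_of_le hA) hpat hc⟩

end TeachingSets

theorem tdmin_le_of_isTeachingSet {n : ℕ} {C : Finset (Fin n → Bool)} {c : Fin n → Bool}
    (hc : c ∈ C) {A : Finset (Fin n)} (hA : IsTeachingSet C c A) : TDmin C ≤ A.card :=
  calc TDmin C ≤ TD C c := Nat.sInf_le ⟨c, hc, rfl⟩
    _ ≤ A.card := Nat.sInf_le ⟨A, rfl, hA⟩

theorem tdmin_empty {n : ℕ} : TDmin (∅ : Finset (Fin n → Bool)) = 0 := by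
  simp [TDmin]

theorem tdmin_le_two {n : ℕ} {C : Finset (Fin n → Bool)} (hC : IsXYClass C 3 4) :
    TDmin C ≤ 2 := by
  obtain rfl | hne := C.eq_empty_or_nonempty
  · exact tdmin_empty.trans_le zero_le_two
  obtain ⟨c, hc, A, hA, hTS⟩ := exists_isTeachingSet_card_le_two hC hne
  exact (tdmin_le_of_isTeachingSet hc hTS).trans hA

theorem eraseMin_subset {n : ℕ} (C : Finset (Fin n → Bool)) : eraseMin C ⊆ C :=
  @filter_subset _ _ (Classical.decPred _) C

theorem iterate_eraseMin_subset {n : ℕ} (C : Finset (Fin n → Bool)) (t : ℕ) :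
    eraseMin^[t] C ⊆ C := by
  induction t with
  | zero => exact subset_rfl
  | succ t ih => exact (Function.iterate_succ_apply' eraseMin t C ▸ eraseMin_subset _).trans ih

theorem stmt13 (n : ℕ) (C : Finset (Fin n → Bool)) (hclass : IsXYClass C 3 4) :
    (C.Nonempty → TDmin C ≤ 2) ∧ RTD C ≤ 2 :=
  ⟨fun _ => tdmin_le_two hclass, csSup_le (Set.range_nonempty _) <| Set.forall_mem_range.2
    fun t => tdmin_le_two (hclass.mono (iterate_eraseMin_subset C t))⟩
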